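/- (Wronskian differences of two pairs of solutions.) Let a₀, a₁, a₂, a₃ be smooth real functions on an open interval J, and let (f, g) and (f̃, g̃) be two pairs of smooth solutions of y'''' + a₃y''' + a₂y'' + a₁y' + a₀y = 0 whose first Wronskians agree on J: f·g′ − f′·g = f̃·g̃′ − f̃′·g̃. Writing Δu_k for the difference of the k-th Wronskian of (f, g) and of (f̃, g̃), one has on J: Δu₂ = 0; Δu₄ = −Δu₃; 2·(Δu₃)′ = −a₃·Δu₃; and 2·Δu₆ = C₁·Δu₃, where C₁ = a₃′ + (1/2)a₃² − 2a₂. In particular Δu₃ is a solution of the first-order linear ODE 2y′ + a₃y = 0. -/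

import Mathlib

/-!
The six Wronskians `u₁, …, u₆` of two solutions satisfy the linear first-order system
`u₁' = u₂`, `u₂' = u₃ + u₄`, `u₃' = u₅ - a₃u₃ - a₂u₂ - a₁u₁`, `u₄' = u₅`,
`u₅' = u₆ - a₃u₅ - a₂u₄ + a₀u₁`, so their differences satisfy it as well. Starting from
`Δu₁ = 0` on the open interval and differentiating each new identity gives in turn `Δu₂ = 0`,
`Δu₃ + Δu₄ = 0` and `2Δu₅ = a₃Δu₃`; the last one, fed back into the equations for `Δu₃'` and
`Δu₅'`, yields `2Δu₃' = -a₃Δu₃` and `2Δu₆ = C₁Δu₃`.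
-/

open Set

variable {𝕜 F : Type*} [NontriviallyNormedField 𝕜] [NormedAddCommGroup F] [NormedSpace 𝕜 F]

theorem ContDiffOn.differentiableAt_iteratedDeriv {n : WithTop ℕ∞} {m : ℕ} {f : 𝕜 → F}
    {s : Set 𝕜} {t : 𝕜} (hf : ContDiffOn 𝕜 n f s) (hs : IsOpen s) (hmn : m < n) (ht : t ∈ s) :
    DifferentiableAt 𝕜 (iteratedDeriv m f) t :=
  ((hf.differentiableOn_iteratedDerivWithin hmn hs.uniqueDiffOn).congr
    (iteratedDerivWithin_of_isOpen hs).symm t ht).differentiableAt (hs.mem_nhds ht)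

theorem HasDerivAt.eq_of_eqOn {φ ψ : 𝕜 → F} {a b : F} {t : 𝕜} {s : Set 𝕜} (hs : IsOpen s)
    (h : EqOn φ ψ s) (ht : t ∈ s) (hφ : HasDerivAt φ a t) (hψ : HasDerivAt ψ b t) : a = b :=
  hφ.unique (hψ.congr_of_eventuallyEq (Filter.eventuallyEq_of_mem (hs.mem_nhds ht) h))

noncomputable def wronskian (i j : ℕ) (f g : 𝕜 → 𝕜) (t : 𝕜) : 𝕜 :=
  iteratedDeriv i f t * iteratedDeriv j g t - iteratedDeriv j f t * iteratedDeriv i g t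

@[simp]
theorem wronskian_self (i : ℕ) (f g : 𝕜 → 𝕜) : wronskian i i f g = 0 := by
  ext t
  simp [wronskian]

theorem hasDerivAt_wronskian {i j : ℕ} {f g : 𝕜 → 𝕜} {t : 𝕜}
    (hfi : DifferentiableAt 𝕜 (iteratedDeriv i f) t)
    (hfj : DifferentiableAt 𝕜 (iteratedDeriv j f) t)
    (hgi : DifferentiableAt 𝕜 (iteratedDeriv i g) t)
    (hgj : DifferentiableAt 𝕜 (iteratedDeriv j g) t) :
    HasDerivAt (wronskian i j f g) (wronskian (i + 1) j f g t + wronskian i (j + 1) f g t) t := by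
  have h := (hfi.hasDerivAt.mul hgj.hasDerivAt).sub (hfj.hasDerivAt.mul hgi.hasDerivAt)
  simp only [← iteratedDeriv_succ] at h
  exact h.congr_deriv (by simp only [wronskian]; ring)

noncomputable def fourthOrderOp (a₀ a₁ a₂ a₃ f : 𝕜 → 𝕜) (t : 𝕜) : 𝕜 :=
  iteratedDeriv 4 f t + a₃ t * iteratedDeriv 3 f t + a₂ t * iteratedDeriv 2 f t +
    a₁ t * deriv f t + a₀ t * f t

section FourthOrder

variable (a₀ a₁ a₂ a₃ f g : 𝕜 → 𝕜) (t : 𝕜)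

theorem wronskian_zero_four : wronskian 0 4 f g t =
    f t * fourthOrderOp a₀ a₁ a₂ a₃ g t - fourthOrderOp a₀ a₁ a₂ a₃ f t * g t -
      (a₃ t * wronskian 0 3 f g t + a₂ t * wronskian 0 2 f g t + a₁ t * wronskian 0 1 f g t) := by
  simp only [wronskian, fourthOrderOp, iteratedDeriv_zero, iteratedDeriv_one]
  ring

theorem wronskian_one_four : wronskian 1 4 f g t =
    deriv f t * fourthOrderOp a₀ a₁ a₂ a₃ g t - fourthOrderOp a₀ a₁ a₂ a₃ f t * deriv g t -
      (a₃ t * wronskian 1 3 f g t + a₂ t * wronskian 1 2 f g t) + a₀ t * wronskian 0 1 f g t := by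
  simp only [wronskian, fourthOrderOp, iteratedDeriv_zero, iteratedDeriv_one]
  ring

end FourthOrder

structure IsWronskianSystemOn (a₀ a₁ a₂ a₃ : 𝕜 → 𝕜) (s : Set 𝕜) (u₁ u₂ u₃ u₄ u₅ u₆ : 𝕜 → 𝕜) :
    Prop where
  hasDerivAt₁ : ∀ t ∈ s, HasDerivAt u₁ (u₂ t) t
  hasDerivAt₂ : ∀ t ∈ s, HasDerivAt u₂ (u₃ t + u₄ t) t
  hasDerivAt₃ : ∀ t ∈ s, HasDerivAt u₃ (u₅ t - a₃ t * u₃ t - a₂ t * u₂ t - a₁ t * u₁ t) t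
  hasDerivAt₄ : ∀ t ∈ s, HasDerivAt u₄ (u₅ t) t
  hasDerivAt₅ : ∀ t ∈ s, HasDerivAt u₅ (u₆ t - a₃ t * u₅ t - a₂ t * u₄ t + a₀ t * u₁ t) t

theorem isWronskianSystemOn_wronskian {a₀ a₁ a₂ a₃ f g : 𝕜 → 𝕜} {s : Set 𝕜} (hs : IsOpen s)
    (hf : ContDiffOn 𝕜 4 f s) (hg : ContDiffOn 𝕜 4 g s)
    (hLf : ∀ t ∈ s, fourthOrderOp a₀ a₁ a₂ a₃ f t = 0)
    (hLg : ∀ t ∈ s, fourthOrderOp a₀ a₁ a₂ a₃ g t = 0) :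
    IsWronskianSystemOn a₀ a₁ a₂ a₃ s (wronskian 0 1 f g) (wronskian 0 2 f g) (wronskian 0 3 f g)
      (wronskian 1 2 f g) (wronskian 1 3 f g) (wronskian 2 3 f g) := by
  have hW : ∀ i j : ℕ, i < 4 → j < 4 → ∀ t ∈ s,
      HasDerivAt (wronskian i j f g) (wronskian (i + 1) j f g t + wronskian i (j + 1) f g t) t :=
    fun i j hi hj t ht =>
      hasDerivAt_wronskian (hf.differentiableAt_iteratedDeriv hs (by exact_mod_cast hi) ht)
        (hf.differentiableAt_iteratedDeriv hs (by exact_mod_cast hj) ht)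
        (hg.differentiableAt_iteratedDeriv hs (by exact_mod_cast hi) ht)
        (hg.differentiableAt_iteratedDeriv hs (by exact_mod_cast hj) ht)
  refine ⟨fun t ht => ?_, fun t ht => ?_, fun t ht => ?_, fun t ht => ?_, fun t ht => ?_⟩
  · simpa using hW 0 1 (by norm_num) (by norm_num) t ht
  · simpa [add_comm] using hW 0 2 (by norm_num) (by norm_num) t ht
  · have h := hW 0 3 (by norm_num) (by norm_num) t ht
    rw [wronskian_zero_four a₀ a₁ a₂ a₃, hLf t ht, hLg t ht] at h
    exact h.congr_deriv (by ring)
  · simpa using hW 1 2 (by norm_num) (by norm_num) t ht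
  · have h := hW 1 3 (by norm_num) (by norm_num) t ht
    rw [wronskian_one_four a₀ a₁ a₂ a₃, hLf t ht, hLg t ht] at h
    exact h.congr_deriv (by ring)

namespace IsWronskianSystemOn

variable {a₀ a₁ a₂ a₃ u₁ u₂ u₃ u₄ u₅ u₆ v₁ v₂ v₃ v₄ v₅ v₆ : 𝕜 → 𝕜} {s : Set 𝕜}

theorem sub (hu : IsWronskianSystemOn a₀ a₁ a₂ a₃ s u₁ u₂ u₃ u₄ u₅ u₆)
    (hv : IsWronskianSystemOn a₀ a₁ a₂ a₃ s v₁ v₂ v₃ v₄ v₅ v₆) :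
    IsWronskianSystemOn a₀ a₁ a₂ a₃ s (u₁ - v₁) (u₂ - v₂) (u₃ - v₃) (u₄ - v₄) (u₅ - v₅)
      (u₆ - v₆) where
  hasDerivAt₁ t ht := (hu.hasDerivAt₁ t ht).sub (hv.hasDerivAt₁ t ht)
  hasDerivAt₂ t ht :=
    ((hu.hasDerivAt₂ t ht).sub (hv.hasDerivAt₂ t ht)).congr_deriv
      (by simp only [Pi.sub_apply]; ring)
  hasDerivAt₃ t ht :=
    ((hu.hasDerivAt₃ t ht).sub (hv.hasDerivAt₃ t ht)).congr_deriv
      (by simp only [Pi.sub_apply]; ring)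
  hasDerivAt₄ t ht := (hu.hasDerivAt₄ t ht).sub (hv.hasDerivAt₄ t ht)
  hasDerivAt₅ t ht :=
    ((hu.hasDerivAt₅ t ht).sub (hv.hasDerivAt₅ t ht)).congr_deriv
      (by simp only [Pi.sub_apply]; ring)

theorem u₂_eq_zero (h : IsWronskianSystemOn a₀ a₁ a₂ a₃ s u₁ u₂ u₃ u₄ u₅ u₆) (hs : IsOpen s)
    (hu₁ : EqOn u₁ 0 s) : EqOn u₂ 0 s := fun t ht =>
  (h.hasDerivAt₁ t ht).eq_of_eqOn hs hu₁ ht (hasDerivAt_const t 0)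

theorem u₄_eq_neg_u₃ (h : IsWronskianSystemOn a₀ a₁ a₂ a₃ s u₁ u₂ u₃ u₄ u₅ u₆) (hs : IsOpen s)
    (hu₁ : EqOn u₁ 0 s) : EqOn u₄ (-u₃) s := fun t ht => by
  have h₃₄ := (h.hasDerivAt₂ t ht).eq_of_eqOn hs (h.u₂_eq_zero hs hu₁) ht (hasDerivAt_const t 0)
  simp only [Pi.neg_apply]
  linear_combination h₃₄

theorem two_mul_u₅ (h : IsWronskianSystemOn a₀ a₁ a₂ a₃ s u₁ u₂ u₃ u₄ u₅ u₆) (hs : IsOpen s)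
    (hu₁ : EqOn u₁ 0 s) : ∀ t ∈ s, 2 * u₅ t = a₃ t * u₃ t := fun t ht => by
  have hu₃₄ : EqOn (u₃ + u₄) 0 s := fun x hx => by simp [h.u₄_eq_neg_u₃ hs hu₁ hx]
  have h₅ := ((h.hasDerivAt₃ t ht).add (h.hasDerivAt₄ t ht)).eq_of_eqOn hs hu₃₄ ht
    (hasDerivAt_const t 0)
  rw [h.u₂_eq_zero hs hu₁ ht, hu₁ ht, Pi.zero_apply] at h₅
  linear_combination h₅

theorem two_mul_deriv_u₃ (h : IsWronskianSystemOn a₀ a₁ a₂ a₃ s u₁ u₂ u₃ u₄ u₅ u₆)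
    (hs : IsOpen s) (hu₁ : EqOn u₁ 0 s) : ∀ t ∈ s, 2 * deriv u₃ t = -a₃ t * u₃ t := fun t ht => by
  rw [(h.hasDerivAt₃ t ht).deriv, h.u₂_eq_zero hs hu₁ ht, hu₁ ht, Pi.zero_apply]
  linear_combination h.two_mul_u₅ hs hu₁ t ht

theorem two_mul_u₆ [CharZero 𝕜] (h : IsWronskianSystemOn a₀ a₁ a₂ a₃ s u₁ u₂ u₃ u₄ u₅ u₆)
    (hs : IsOpen s) (hu₁ : EqOn u₁ 0 s) (ha₃ : DifferentiableOn 𝕜 a₃ s) :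
    ∀ t ∈ s, 2 * u₆ t = (deriv a₃ t + 1 / 2 * a₃ t ^ 2 - 2 * a₂ t) * u₃ t := fun t ht => by
  have hd : HasDerivAt (fun x => a₃ x * u₃ x) (deriv a₃ t * u₃ t + a₃ t * deriv u₃ t) t :=
    (ha₃.differentiableAt (hs.mem_nhds ht)).hasDerivAt.mul
      (h.hasDerivAt₃ t ht).differentiableAt.hasDerivAt
  have h₆ := ((h.hasDerivAt₅ t ht).const_mul 2).eq_of_eqOn hs (h.two_mul_u₅ hs hu₁) ht hd
  have h₄ := h.u₄_eq_neg_u₃ hs hu₁ ht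
  simp only [Pi.neg_apply] at h₄
  rw [hu₁ ht, Pi.zero_apply, h₄] at h₆
  linear_combination h₆ + a₃ t * h.two_mul_u₅ hs hu₁ t ht +
    1 / 2 * a₃ t * h.two_mul_deriv_u₃ hs hu₁ t ht

end IsWronskianSystemOn

theorem stmt_19_general (A B : ℝ)
    (a₀ a₁ a₂ a₃ f g ft gt : ℝ → ℝ)
    (ha₃ : ContDiffOn ℝ (⊤ : ℕ∞) a₃ (Set.Ioo A B))
    (hf : ContDiffOn ℝ (⊤ : ℕ∞) f (Set.Ioo A B))
    (hg : ContDiffOn ℝ (⊤ : ℕ∞) g (Set.Ioo A B))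
    (hft : ContDiffOn ℝ (⊤ : ℕ∞) ft (Set.Ioo A B))
    (hgt : ContDiffOn ℝ (⊤ : ℕ∞) gt (Set.Ioo A B))
    (hfsol : ∀ t ∈ Set.Ioo A B, iteratedDeriv 4 f t + a₃ t * iteratedDeriv 3 f t +
      a₂ t * iteratedDeriv 2 f t + a₁ t * deriv f t + a₀ t * f t = 0)
    (hgsol : ∀ t ∈ Set.Ioo A B, iteratedDeriv 4 g t + a₃ t * iteratedDeriv 3 g t +
      a₂ t * iteratedDeriv 2 g t + a₁ t * deriv g t + a₀ t * g t = 0)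
    (hftsol : ∀ t ∈ Set.Ioo A B, iteratedDeriv 4 ft t + a₃ t * iteratedDeriv 3 ft t +
      a₂ t * iteratedDeriv 2 ft t + a₁ t * deriv ft t + a₀ t * ft t = 0)
    (hgtsol : ∀ t ∈ Set.Ioo A B, iteratedDeriv 4 gt t + a₃ t * iteratedDeriv 3 gt t +
      a₂ t * iteratedDeriv 2 gt t + a₁ t * deriv gt t + a₀ t * gt t = 0)
    (hu1 : ∀ t ∈ Set.Ioo A B,
      f t * deriv g t - deriv f t * g t = ft t * deriv gt t - deriv ft t * gt t)
    (Δu₂ Δu₃ Δu₄ Δu₆ C₁ : ℝ → ℝ)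
    (hΔu₂ : Δu₂ = fun t => (f t * iteratedDeriv 2 g t - iteratedDeriv 2 f t * g t) -
      (ft t * iteratedDeriv 2 gt t - iteratedDeriv 2 ft t * gt t))
    (hΔu₃ : Δu₃ = fun t => (f t * iteratedDeriv 3 g t - iteratedDeriv 3 f t * g t) -
      (ft t * iteratedDeriv 3 gt t - iteratedDeriv 3 ft t * gt t))
    (hΔu₄ : Δu₄ = fun t =>
      (deriv f t * iteratedDeriv 2 g t - iteratedDeriv 2 f t * deriv g t) -
      (deriv ft t * iteratedDeriv 2 gt t - iteratedDeriv 2 ft t * deriv gt t))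
    (hΔu₆ : Δu₆ = fun t =>
      (iteratedDeriv 2 f t * iteratedDeriv 3 g t - iteratedDeriv 3 f t * iteratedDeriv 2 g t) -
      (iteratedDeriv 2 ft t * iteratedDeriv 3 gt t -
        iteratedDeriv 3 ft t * iteratedDeriv 2 gt t))
    (hC₁ : C₁ = fun t => deriv a₃ t + (1 / 2) * (a₃ t) ^ 2 - 2 * a₂ t) :
    ∀ t ∈ Set.Ioo A B,
      Δu₂ t = 0 ∧
      Δu₄ t = -Δu₃ t ∧
      2 * deriv Δu₃ t = -(a₃ t) * Δu₃ t ∧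
      2 * Δu₆ t = C₁ t * Δu₃ t := by
  have hs : IsOpen (Ioo A B) := isOpen_Ioo
  have h4 : (4 : WithTop ℕ∞) ≤ ((⊤ : ℕ∞) : WithTop ℕ∞) := WithTop.coe_le_coe.mpr le_top
  have hΔ := (isWronskianSystemOn_wronskian hs (hf.of_le h4) (hg.of_le h4) hfsol hgsol).sub
    (isWronskianSystemOn_wronskian hs (hft.of_le h4) (hgt.of_le h4) hftsol hgtsol)
  have hΔu₁ : EqOn (wronskian 0 1 f g - wronskian 0 1 ft gt) 0 (Ioo A B) := fun t ht => by
    simpa [wronskian, sub_eq_zero] using hu1 t ht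
  obtain rfl : Δu₂ = wronskian 0 2 f g - wronskian 0 2 ft gt := by rw [hΔu₂]; ext; simp [wronskian]
  obtain rfl : Δu₃ = wronskian 0 3 f g - wronskian 0 3 ft gt := by rw [hΔu₃]; ext; simp [wronskian]
  obtain rfl : Δu₄ = wronskian 1 2 f g - wronskian 1 2 ft gt := by rw [hΔu₄]; ext; simp [wronskian]
  obtain rfl : Δu₆ = wronskian 2 3 f g - wronskian 2 3 ft gt := by rw [hΔu₆]; ext; simp [wronskian]
  subst hC₁
  intro t ht
  exact ⟨hΔ.u₂_eq_zero hs hΔu₁ ht, hΔ.u₄_eq_neg_u₃ hs hΔu₁ ht, hΔ.two_mul_deriv_u₃ hs hΔu₁ t ht,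
    hΔ.two_mul_u₆ hs hΔu₁ (ha₃.differentiableOn (by simp)) t ht⟩

/-- Wronskian differences of two pairs of solutions of
`y'''' + a₃y''' + a₂y'' + a₁y' + a₀y = 0` whose first Wronskians agree:
`Δu₂ = 0`, `Δu₄ = −Δu₃`, `2(Δu₃)′ = −a₃Δu₃`, and `2Δu₆ = C₁Δu₃` with
`C₁ = a₃′ + (1/2)a₃² − 2a₂`. -/
theorem stmt_19 (A B : ℝ)
    (a₀ a₁ a₂ a₃ f g ft gt : ℝ → ℝ)
    (ha₀ : ContDiffOn ℝ (⊤ : ℕ∞) a₀ (Set.Ioo A B))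
    (ha₁ : ContDiffOn ℝ (⊤ : ℕ∞) a₁ (Set.Ioo A B))
    (ha₂ : ContDiffOn ℝ (⊤ : ℕ∞) a₂ (Set.Ioo A B))
    (ha₃ : ContDiffOn ℝ (⊤ : ℕ∞) a₃ (Set.Ioo A B))
    (hf : ContDiffOn ℝ (⊤ : ℕ∞) f (Set.Ioo A B))
    (hg : ContDiffOn ℝ (⊤ : ℕ∞) g (Set.Ioo A B))
    (hft : ContDiffOn ℝ (⊤ : ℕ∞) ft (Set.Ioo A B))
    (hgt : ContDiffOn ℝ (⊤ : ℕ∞) gt (Set.Ioo A B))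
    (hfsol : ∀ t ∈ Set.Ioo A B, iteratedDeriv 4 f t + a₃ t * iteratedDeriv 3 f t +
      a₂ t * iteratedDeriv 2 f t + a₁ t * deriv f t + a₀ t * f t = 0)
    (hgsol : ∀ t ∈ Set.Ioo A B, iteratedDeriv 4 g t + a₃ t * iteratedDeriv 3 g t +
      a₂ t * iteratedDeriv 2 g t + a₁ t * deriv g t + a₀ t * g t = 0)
    (hftsol : ∀ t ∈ Set.Ioo A B, iteratedDeriv 4 ft t + a₃ t * iteratedDeriv 3 ft t +
      a₂ t * iteratedDeriv 2 ft t + a₁ t * deriv ft t + a₀ t * ft t = 0)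
    (hgtsol : ∀ t ∈ Set.Ioo A B, iteratedDeriv 4 gt t + a₃ t * iteratedDeriv 3 gt t +
      a₂ t * iteratedDeriv 2 gt t + a₁ t * deriv gt t + a₀ t * gt t = 0)
    (hu1 : ∀ t ∈ Set.Ioo A B,
      f t * deriv g t - deriv f t * g t = ft t * deriv gt t - deriv ft t * gt t)
    (Δu₂ Δu₃ Δu₄ Δu₆ C₁ : ℝ → ℝ)
    (hΔu₂ : Δu₂ = fun t => (f t * iteratedDeriv 2 g t - iteratedDeriv 2 f t * g t) -
      (ft t * iteratedDeriv 2 gt t - iteratedDeriv 2 ft t * gt t))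
    (hΔu₃ : Δu₃ = fun t => (f t * iteratedDeriv 3 g t - iteratedDeriv 3 f t * g t) -
      (ft t * iteratedDeriv 3 gt t - iteratedDeriv 3 ft t * gt t))
    (hΔu₄ : Δu₄ = fun t =>
      (deriv f t * iteratedDeriv 2 g t - iteratedDeriv 2 f t * deriv g t) -
      (deriv ft t * iteratedDeriv 2 gt t - iteratedDeriv 2 ft t * deriv gt t))
    (hΔu₆ : Δu₆ = fun t =>
      (iteratedDeriv 2 f t * iteratedDeriv 3 g t - iteratedDeriv 3 f t * iteratedDeriv 2 g t) -
      (iteratedDeriv 2 ft t * iteratedDeriv 3 gt t -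
        iteratedDeriv 3 ft t * iteratedDeriv 2 gt t))
    (hC₁ : C₁ = fun t => deriv a₃ t + (1 / 2) * (a₃ t) ^ 2 - 2 * a₂ t) :
    ∀ t ∈ Set.Ioo A B,
      Δu₂ t = 0 ∧
      Δu₄ t = -Δu₃ t ∧
      2 * deriv Δu₃ t = -(a₃ t) * Δu₃ t ∧
      2 * Δu₆ t = C₁ t * Δu₃ t :=
  stmt_19_general A B a₀ a₁ a₂ a₃ f g ft gt ha₃ hf hg hft hgt hfsol hgsol hftsol hgtsol hu1 Δu₂ Δu₃
    Δu₄ Δu₆ C₁ hΔu₂ hΔu₃ hΔu₄ hΔu₆ hC₁
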